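/- For every real L ≥ 0 and every ε ∈ (0, π/2) there exist θ₀ ∈ (π/2, 5π/8) and τ₀ > 0 such that for every θ ∈ (π/2, θ₀), every τ ∈ (0, τ₀], and every nonzero complex number z with |arg z| ≤ θ and |Im z| ≤ π/τ + L, the complex number δ_{τ,2}(e^{−zτ}) = (3/2 − 2e^{−zτ} + e^{−2zτ}/2)/τ is nonzero and satisfies |arg(δ_{τ,2}(e^{−zτ}))| ≤ π/2 + ε. -/

import Mathlib

open Real Complex

/-! The symbol is `(1 - ζ)(3 - ζ)/2` at `ζ = e^{-w}`, `w = zτ`, which for `|Im w| < 2π` and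
`Re w > -log 3` vanishes only at `w = 0`, and the sector `Σ_{π/2+ε}` is the half-plane
`0 ≤ Re u + tan ε · |Im u|`. The constraint on `arg z` gives `-Re w ≤ m |Im w|` for a small `m`,
so `ρ = |ζ| = e^{-Re w}` has `ρ² - 1 = O(m |Im w|)`. The real part of the symbol is
`(1 - Re ζ)² + (1 - ρ²)/2`, nonnegative when `ρ ≤ 1` and positive when `Re ζ ≤ 0`; in the
remaining case `|Im w| < π/2`, and Jordan's inequality makes `tan ε · |Im|` at least of order
`tan ε · |Im w|`, which dominates `(ρ² - 1)/2` once `m ≤ tan ε / 4`. -/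

lemma abs_arg_le_pi_div_two_add_iff {ε : ℝ} (hε : ε ∈ Set.Ioo (-(π / 2)) (π / 2)) (u : ℂ) :
    |arg u| ≤ π / 2 + ε ↔ 0 ≤ u.re + Real.tan ε * |u.im| := by
  have hπ : |arg u| ≤ π := abs_arg_le_pi u
  have hcos : 0 < Real.cos ε := cos_pos_of_mem_Ioo hε
  have hre : u.re = ‖u‖ * Real.cos |arg u| := by rw [cos_abs, norm_mul_cos_arg]
  have him : |u.im| = ‖u‖ * Real.sin |arg u| := by
    rw [← abs_sin_eq_sin_abs_of_abs_le_pi hπ, ← norm_mul_sin_arg, abs_mul, abs_norm]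
  have hrot : u.re + Real.tan ε * |u.im| = ‖u‖ / Real.cos ε * Real.cos (|arg u| - ε) := by
    rw [hre, him, Real.tan_eq_sin_div_cos, Real.cos_sub]
    field_simp
  rw [hrot]
  rcases eq_or_ne u 0 with rfl | hu
  · simp only [arg_zero, abs_zero, norm_zero, zero_div, zero_mul, le_refl, iff_true]
    linarith [hε.1]
  rw [mul_nonneg_iff_of_pos_left (div_pos (norm_pos_iff.2 hu) hcos)]
  constructor
  · intro h
    exact cos_nonneg_of_mem_Icc ⟨by linarith [abs_nonneg (arg u), hε.2], by linarith⟩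
  · intro h
    by_contra! h'
    linarith [cos_neg_of_pi_div_two_lt_of_lt (x := |arg u| - ε) (by linarith)
      (by linarith [hε.1])]

lemma two_div_pi_mul_abs_le_abs_sin_of_cos_pos {y : ℝ} (hy : |y| ≤ π + π / 2)
    (hcos : 0 < Real.cos y) : 2 / π * |y| ≤ |Real.sin y| := by
  have hy' : |y| ≤ π / 2 := by
    by_contra! h
    have := cos_nonpos_of_pi_div_two_le_of_le h.le hy
    rw [cos_abs] at this
    linarith
  rw [abs_sin_eq_sin_abs_of_abs_le_pi (by linarith [pi_pos])]
  exact mul_le_sin (abs_nonneg y) hy'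

lemma exp_le_one_add_ten_ninths_mul {u : ℝ} (hu0 : 0 ≤ u) (hu : u ≤ 1 / 10) :
    Real.exp u ≤ 1 + 10 / 9 * u := by
  calc Real.exp u ≤ 1 / (1 - u) := exp_bound_div_one_sub_of_interval hu0 (by linarith)
    _ ≤ 1 + 10 / 9 * u := by
      rw [div_le_iff₀ (by linarith)]
      nlinarith

/-- `τ · δ_{τ,2}(ζ)`. -/
noncomputable def bdf2Symbol (ζ : ℂ) : ℂ := (1 - ζ) + (1 - ζ) ^ 2 / 2

lemma bdf2Symbol_eq_mul (ζ : ℂ) : bdf2Symbol ζ = (1 - ζ) * (3 - ζ) / 2 := by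
  unfold bdf2Symbol
  ring

lemma bdf2Symbol_eq_zero_iff {ζ : ℂ} : bdf2Symbol ζ = 0 ↔ ζ = 1 ∨ ζ = 3 := by
  simp [bdf2Symbol_eq_mul, sub_eq_zero, eq_comm (a := (1 : ℂ)), eq_comm (a := (3 : ℂ))]

lemma bdf2Symbol_re (ζ : ℂ) : (bdf2Symbol ζ).re = (1 - ζ.re) ^ 2 + (1 - ‖ζ‖ ^ 2) / 2 := by
  rw [← normSq_eq_norm_sq, normSq_apply]
  simp only [bdf2Symbol, sq, add_re, sub_re, one_re, div_ofNat_re, mul_re, sub_im, one_im,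
    zero_sub, mul_neg, neg_mul, neg_neg]
  ring

lemma bdf2Symbol_im (ζ : ℂ) : (bdf2Symbol ζ).im = -ζ.im * (2 - ζ.re) := by
  simp only [bdf2Symbol, sq, add_im, sub_im, one_im, zero_sub, div_ofNat_im, mul_im, sub_re,
    one_re, mul_neg, neg_mul]
  ring

lemma bdf2Symbol_exp_neg (w : ℂ) :
    bdf2Symbol (exp (-w)) = 3 / 2 - 2 * exp (-w) + exp (-2 * w) / 2 := by
  rw [bdf2Symbol, show -2 * w = -w + -w by ring, Complex.exp_add]
  ring

lemma bdf2Symbol_exp_neg_ne_zero {w : ℂ} (hw : w ≠ 0) (him : |w.im| < 2 * π)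
    (hre : -w.re < Real.log 3) : bdf2Symbol (exp (-w)) ≠ 0 := by
  rw [Ne, bdf2Symbol_eq_zero_iff]
  rintro (h | h)
  · obtain ⟨n, hn⟩ := Complex.exp_eq_one_iff.1 h
    have hn_im : -w.im = n * (2 * π) := by simpa using congrArg Complex.im hn
    have hn0 : n = 0 := by
      have : |(n : ℝ) * (2 * π)| < 2 * π := by rwa [← hn_im, abs_neg]
      rw [abs_mul, abs_of_pos two_pi_pos, mul_lt_iff_lt_one_left two_pi_pos] at this
      exact Int.abs_lt_one_iff.1 (by exact_mod_cast this)
    exact hw (neg_eq_zero.1 (by simpa [hn0] using hn))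
  · have h3 := congrArg norm h
    rw [Complex.norm_exp, neg_re, Complex.norm_ofNat,
      ← Real.exp_log (by norm_num : (0 : ℝ) < 3)] at h3
    exact hre.ne (Real.exp_injective h3)

lemma norm_exp_neg_sq_le {m : ℝ} {w : ℂ} (hm : 0 ≤ m) (hm1 : m ≤ 1 / 100)
    (him : |w.im| ≤ π + 1) (hre : -w.re ≤ m * |w.im|) :
    ‖exp (-w)‖ ^ 2 ≤ 1 + 20 / 9 * m * |w.im| := by
  calc ‖exp (-w)‖ ^ 2 = Real.exp (2 * -w.re) := by
        rw [Complex.norm_exp, neg_re, ← Real.exp_nat_mul]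
        norm_num
    _ ≤ Real.exp (2 * m * |w.im|) := Real.exp_le_exp.2 (by linarith)
    _ ≤ 1 + 10 / 9 * (2 * m * |w.im|) :=
        exp_le_one_add_ten_ninths_mul (by positivity)
          (by nlinarith [abs_nonneg w.im, pi_lt_d2])
    _ = 1 + 20 / 9 * m * |w.im| := by ring

lemma re_add_mul_abs_im_bdf2Symbol_exp_nonneg {m t : ℝ} {w : ℂ} (hm : 0 ≤ m) (hmt : m ≤ t / 4)
    (hm1 : m ≤ 1 / 100) (him : |w.im| ≤ π + 1) (hre : -w.re ≤ m * |w.im|) :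
    0 ≤ (bdf2Symbol (exp (-w))).re + t * |(bdf2Symbol (exp (-w))).im| := by
  have hρ_sq := norm_exp_neg_sq_le hm hm1 him hre
  set ζ := exp (-w) with hζ
  set y := w.im
  have hπ : π < 3.15 := pi_lt_d2
  have ht : 0 ≤ t := by linarith
  have hρ_sq_le_two : ‖ζ‖ ^ 2 ≤ 2 := by nlinarith [abs_nonneg y]
  rw [bdf2Symbol_re, bdf2Symbol_im]
  rcases le_or_gt ‖ζ‖ 1 with hρ | hρ
  · have : ‖ζ‖ ^ 2 ≤ 1 := pow_le_one₀ (norm_nonneg ζ) hρ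
    nlinarith [sq_nonneg (1 - ζ.re), mul_nonneg ht (abs_nonneg (-ζ.im * (2 - ζ.re)))]
  rcases le_or_gt ζ.re 0 with hζre | hζre
  · nlinarith [mul_nonneg ht (abs_nonneg (-ζ.im * (2 - ζ.re)))]
  have hζre_eq : ζ.re = ‖ζ‖ * Real.cos y := by
    rw [hζ, Complex.exp_re, Complex.norm_exp, neg_im, Real.cos_neg]
  have hζim_eq : |ζ.im| = ‖ζ‖ * |Real.sin y| := by
    rw [hζ, Complex.exp_im, Complex.norm_exp, neg_im, Real.sin_neg, abs_mul, abs_neg,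
      abs_of_pos (Real.exp_pos _)]
  have hjordan : 2 / π * |y| ≤ |Real.sin y| :=
    two_div_pi_mul_abs_le_abs_sin_of_cos_pos (by linarith [pi_gt_three])
      (pos_of_mul_pos_right (hζre_eq ▸ hζre) (norm_nonneg ζ))
  have hρ_le : ‖ζ‖ ≤ 3 / 2 := by nlinarith
  have hgap : 1 / 2 ≤ 2 - ζ.re := by linarith [re_le_norm ζ]
  have him_lower : t * (|y| / π) ≤ t * |-ζ.im * (2 - ζ.re)| := by
    rw [abs_mul, abs_neg, abs_of_pos (by linarith : (0 : ℝ) < 2 - ζ.re), hζim_eq]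
    refine mul_le_mul_of_nonneg_left ?_ ht
    calc |y| / π = 2 / π * |y| * (1 / 2) := by ring
      _ ≤ |Real.sin y| * (2 - ζ.re) := mul_le_mul hjordan hgap (by norm_num) (abs_nonneg _)
      _ ≤ ‖ζ‖ * |Real.sin y| * (2 - ζ.re) := by
          rw [mul_assoc]
          exact le_mul_of_one_le_left (mul_nonneg (abs_nonneg _) (by linarith)) hρ.le
  have hπ_inv : 10 / 36 ≤ 1 / π := by rw [le_div_iff₀ pi_pos]; linarith
  have hdominate : 10 / 9 * m * |y| ≤ t * (|y| / π) := by
    rw [div_eq_mul_one_div |y|]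
    nlinarith [abs_nonneg y, mul_nonneg ht (abs_nonneg y)]
  nlinarith [sq_nonneg (1 - ζ.re)]

/-- Lemma 3.3: for every L ≥ 0 and ε ∈ (0, π/2) there exist θ₀ ∈ (π/2, 5π/8) and
τ₀ > 0 such that for θ ∈ (π/2, θ₀), τ ∈ (0, τ₀], and z ≠ 0 with |arg z| ≤ θ and
|Im z| ≤ π/τ + L, the symbol δ_{τ,2}(e^{−zτ}) lies in the sector Σ_{π/2+ε}. -/
theorem stmt_6 (L ε : ℝ) (hL : 0 ≤ L) (hε : ε ∈ Set.Ioo 0 (Real.pi / 2)) :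
    ∃ θ₀ ∈ Set.Ioo (Real.pi / 2) (5 * Real.pi / 8), ∃ τ₀ > (0 : ℝ),
      ∀ θ ∈ Set.Ioo (Real.pi / 2) θ₀, ∀ τ ∈ Set.Ioc (0 : ℝ) τ₀,
        ∀ z : ℂ, z ≠ 0 → |z.arg| ≤ θ → |z.im| ≤ Real.pi / τ + L →
          (3 / 2 - 2 * Complex.exp (-z * (τ : ℂ))
              + Complex.exp (-2 * z * (τ : ℂ)) / 2) / (τ : ℂ) ≠ 0 ∧
          |((3 / 2 - 2 * Complex.exp (-z * (τ : ℂ))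
              + Complex.exp (-2 * z * (τ : ℂ)) / 2) / (τ : ℂ)).arg|
            ≤ Real.pi / 2 + ε := by
  obtain ⟨hε0, hεπ⟩ := hε
  have ht : 0 < Real.tan ε := Real.tan_pos_of_pos_of_lt_pi_div_two hε0 hεπ
  set m := min (Real.tan ε / 4) (1 / 100)
  have hm : 0 < m := lt_min (by positivity) (by norm_num)
  have hm1 : m ≤ 1 / 100 := min_le_right _ _
  have harctan : Real.arctan m ≤ m := by
    simpa using Real.le_tan (Real.arctan_pos.2 hm).le (Real.arctan_lt_pi_div_two m)
  refine ⟨π / 2 + Real.arctan m, ⟨by linarith [arctan_pos.2 hm], by linarith [pi_gt_three]⟩,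
    1 / (L + 1), by positivity, ?_⟩
  rintro θ ⟨-, hθ⟩ τ ⟨hτ0, hτ⟩ z hz harg himz
  set w := z * (τ : ℂ)
  have hδ : (3 / 2 - 2 * exp (-z * (τ : ℂ)) + exp (-2 * z * (τ : ℂ)) / 2) / (τ : ℂ)
      = bdf2Symbol (exp (-w)) / (τ : ℂ) := by
    rw [bdf2Symbol_exp_neg, show -z * (τ : ℂ) = -w by ring,
      show -2 * z * (τ : ℂ) = -2 * w by ring]
  have him : |w.im| ≤ π + 1 := by
    have hLτ : L * τ ≤ 1 := by
      rw [le_div_iff₀ (by linarith)] at hτ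
      nlinarith
    calc |w.im| = |z.im| * τ := by simp [w, abs_mul, abs_of_pos hτ0]
      _ ≤ (π / τ + L) * τ := by gcongr
      _ ≤ π + 1 := by rw [add_mul, div_mul_cancel₀ _ hτ0.ne']; linarith
  have hre : -w.re ≤ m * |w.im| := by
    have := (abs_arg_le_pi_div_two_add_iff (Real.arctan_mem_Ioo m) w).1
      (by rw [arg_mul_real hτ0]; linarith)
    rw [Real.tan_arctan] at this
    linarith
  have hlog3 : 1 < Real.log 3 :=
    (lt_log_iff_exp_lt (by norm_num)).2 (exp_one_lt_d9.trans (by norm_num))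
  have hf : bdf2Symbol (exp (-w)) ≠ 0 :=
    bdf2Symbol_exp_neg_ne_zero (mul_ne_zero hz (ofReal_ne_zero.2 hτ0.ne'))
      (by linarith [pi_gt_three])
      (by nlinarith [abs_nonneg w.im, pi_lt_d2])
  rw [hδ, div_eq_mul_inv, ← ofReal_inv, arg_mul_real (inv_pos.2 hτ0),
    abs_arg_le_pi_div_two_add_iff ⟨by linarith, hεπ⟩]
  exact ⟨mul_ne_zero hf (ofReal_ne_zero.2 (inv_pos.2 hτ0).ne'),
    re_add_mul_abs_im_bdf2Symbol_exp_nonneg hm.le (min_le_left _ _) hm1 him hre⟩
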